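/- arXiv:1611.06224 — 3 statements merged into one kernel-verified Lean document; each statement's English description precedes it below -/
import Mathlib

section
/- In the optimal parameter archival storage problem under the independent retrieval scheme, any optimal solution (a connected spanning subgraph minimizing total storage cost subject to per-snapshot recreation-cost constraints) can be replaced by a spanning tree that also satisfies all constraints and has total storage cost no larger. Hence if a feasible solution exists, an optimal solution that is a spanning tree exists. -/
open scoped Classical

/-- The recreation cost of a walk: the sum of the recreation costs of its edges. -/
noncomputable def walkCost {V : Type*} (c : Sym2 V → ℝ) {H : SimpleGraph V} {u v : V}
    (p : H.Walk u v) : ℝ := (p.edges.map c).sum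

/-- The recreation cost of a vertex `v` in a subgraph `H`: the infimum, over walks from
the root `u` to `v` in `H`, of the sum of the recreation costs along the walk. -/
noncomputable def recCost {V : Type*} (c : Sym2 V → ℝ) (H : SimpleGraph V) (u v : V) : ℝ :=
  sInf {x | ∃ p : H.Walk u v, x = walkCost c p}

/-- The total storage cost of a subgraph: the sum of the storage costs of its edges. -/
noncomputable def storCost {V : Type*} [Fintype V] (c : Sym2 V → ℝ) (H : SimpleGraph V) : ℝ :=
  ∑ e ∈ H.edgeSet.toFinite.toFinset, c e

namespace StmtAux

open SimpleGraph

variable {V : Type*}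

lemma walkCost_concat (c : Sym2 V → ℝ) {H : SimpleGraph V} {u v w : V}
    (p : H.Walk u v) (h : H.Adj v w) :
    walkCost c (p.concat h) = walkCost c p + c s(v, w) := by
  simp [walkCost, SimpleGraph.Walk.edges_concat]

lemma walkCost_nonneg {c : Sym2 V → ℝ} {H : SimpleGraph V}
    (hc : ∀ e ∈ H.edgeSet, 0 ≤ c e) {u v : V} (p : H.Walk u v) :
    0 ≤ walkCost c p := by
  apply List.sum_nonneg
  intro x hx
  obtain ⟨e, he, rfl⟩ := List.mem_map.mp hx
  exact hc e (p.edges_subset_edgeSet he)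

lemma sum_map_le_of_nodup_subset (c : Sym2 V → ℝ) :
    ∀ (l₂ l₁ : List (Sym2 V)), l₂.Nodup → l₂ ⊆ l₁ → (∀ e ∈ l₁, 0 ≤ c e) →
      (l₂.map c).sum ≤ (l₁.map c).sum
  | [], l₁, _, _, hc => by
      apply List.sum_nonneg
      intro x hx
      obtain ⟨e, he, rfl⟩ := List.mem_map.mp hx
      exact hc e he
  | a :: t, l₁, hnd, hsub, hc => by
      have ha : a ∈ l₁ := hsub List.mem_cons_self
      have hperm : List.Perm l₁ (a :: l₁.erase a) := List.perm_cons_erase ha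
      have htsub : t ⊆ l₁.erase a := by
        intro x hx
        have hxa : x ≠ a := by rintro rfl; exact (List.nodup_cons.mp hnd).1 hx
        exact (List.mem_erase_of_ne hxa).mpr (hsub (List.mem_cons_of_mem _ hx))
      have hc' : ∀ e ∈ l₁.erase a, 0 ≤ c e := fun e he => hc e (List.erase_subset he)
      have ih := sum_map_le_of_nodup_subset c t (l₁.erase a) (List.nodup_cons.mp hnd).2 htsub hc'
      have hsum : ((l₁.map c)).sum = c a + ((l₁.erase a).map c).sum := by
        have := (hperm.map c).sum_eq
        simpa using this
      have : ((a :: t).map c).sum = c a + (t.map c).sum := by simp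
      rw [this, hsum]
      linarith

lemma recCost_le_walkCost {c : Sym2 V → ℝ} {H : SimpleGraph V}
    (hc : ∀ e ∈ H.edgeSet, 0 ≤ c e) {u v : V} (w : H.Walk u v) :
    recCost c H u v ≤ walkCost c w :=
  csInf_le ⟨0, by rintro x ⟨p, rfl⟩; exact walkCost_nonneg hc p⟩ ⟨w, rfl⟩

lemma recCost_nonneg {c : Sym2 V → ℝ} {H : SimpleGraph V}
    (hc : ∀ e ∈ H.edgeSet, 0 ≤ c e) {u v : V} (hr : H.Reachable u v) :
    0 ≤ recCost c H u v := by
  obtain ⟨w⟩ := hr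
  exact le_csInf ⟨_, w, rfl⟩ (by rintro x ⟨p, rfl⟩; exact walkCost_nonneg hc p)

lemma recCost_spec [Fintype V] {c : Sym2 V → ℝ} {H : SimpleGraph V}
    (hc : ∀ e ∈ H.edgeSet, 0 ≤ c e) {u v : V} (hr : H.Reachable u v) :
    (∃ p : H.Walk u v, walkCost c p = recCost c H u v) ∧
      (∀ q : H.Walk u v, recCost c H u v ≤ walkCost c q) := by
  classical
  obtain ⟨w⟩ := hr
  set F : Finset ℝ :=
    Finset.univ.image (fun p : H.Path u v => walkCost c (p : H.Walk u v)) with hF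
  have hFne : F.Nonempty := ⟨walkCost c (w.toPath : H.Walk u v), by
    simp [hF]⟩
  set m := F.min' hFne with hm
  have hbypass : ∀ q : H.Walk u v, m ≤ walkCost c q := by
    intro q
    have h1 : walkCost c (q.bypass) ≤ walkCost c q := by
      apply sum_map_le_of_nodup_subset
      · exact q.bypass_isPath.isTrail.edges_nodup
      · exact q.edges_bypass_subset
      · exact fun e he => hc e (q.edges_subset_edgeSet he)
    have h2 : m ≤ walkCost c (q.bypass) := by
      apply F.min'_le
      simp only [hF, Finset.mem_image]
      exact ⟨q.toPath, Finset.mem_univ _, rfl⟩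
    linarith
  have hmemF : m ∈ F := F.min'_mem hFne
  obtain ⟨p, -, hp⟩ := Finset.mem_image.mp hmemF
  have heq : recCost c H u v = m := by
    apply le_antisymm
    · exact hp ▸ recCost_le_walkCost hc (p : H.Walk u v)
    · exact le_csInf ⟨_, w, rfl⟩ (by rintro x ⟨q, rfl⟩; exact hbypass q)
  exact ⟨⟨p, by rw [hp, heq]⟩, fun q => heq ▸ hbypass q⟩

lemma exists_tree [Fintype V] {G P : SimpleGraph V} (hPG : P ≤ G)
    (hPc : P.Connected) {cr : Sym2 V → ℝ} (hcr : ∀ e ∈ G.edgeSet, 0 < cr e) (v₀ : V) :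
    ∃ T : SimpleGraph V, T ≤ P ∧ T.IsTree ∧
      ∀ v, recCost cr T v₀ v ≤ recCost cr P v₀ v := by
  classical
  have hcr0 : ∀ e ∈ P.edgeSet, 0 ≤ cr e := fun e he => (hcr e (edgeSet_mono hPG he)).le
  set D : V → ℝ := fun v => recCost cr P v₀ v with hD
  have hreach : ∀ v, P.Reachable v₀ v := fun v => hPc.preconnected v₀ v
  have hspec := fun v => recCost_spec hcr0 (hreach v)
  have hparent : ∀ v, v ≠ v₀ → ∃ u, P.Adj u v ∧ D u + cr s(u, v) ≤ D v ∧ D u < D v := by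
    intro v hv
    obtain ⟨⟨p, hp⟩, hlb⟩ := hspec v
    cases p with
    | nil => exact absurd rfl hv.symm
    | @cons _ b _ h q =>
      obtain ⟨x, r, h', hcq⟩ := SimpleGraph.Walk.exists_cons_eq_concat h q
      refine ⟨x, h', ?_, ?_⟩
      · have hcost : walkCost cr r + cr s(x, v) = D v := by
          rw [← walkCost_concat cr r h', ← hcq, hp]
        have hDx : D x ≤ walkCost cr r := (hspec x).2 r
        linarith
      · have hcost : walkCost cr r + cr s(x, v) = D v := by
          rw [← walkCost_concat cr r h', ← hcq, hp]
        have hDx : D x ≤ walkCost cr r := (hspec x).2 r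
        have hpos : 0 < cr s(x, v) :=
          hcr _ (edgeSet_mono hPG ((SimpleGraph.mem_edgeSet P).mpr h'))
        linarith
  choose! parent hpadj hple hplt using hparent
  set T : SimpleGraph V :=
    { Adj := fun x y => (x ≠ v₀ ∧ parent x = y) ∨ (y ≠ v₀ ∧ parent y = x)
      symm := ⟨fun x y h => h.symm⟩
      loopless := ⟨fun x h => by
        rcases h with ⟨hx, hp⟩ | ⟨hx, hp⟩ <;>
        · have := hplt x hx
          rw [hp] at this
          exact lt_irrefl _ this⟩ } with hT
  have hTP : T ≤ P := by
    intro x y h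
    rcases h with ⟨hx, hp⟩ | ⟨hy, hp⟩
    · subst hp; exact (hpadj x hx).symm
    · subst hp; exact hpadj y hy
  have hcr0T : ∀ e ∈ T.edgeSet, 0 ≤ cr e := fun e he => hcr0 e (edgeSet_mono hTP he)
  have hadjT : ∀ v, v ≠ v₀ → T.Adj (parent v) v := fun v hv => Or.inr ⟨hv, rfl⟩
  have hD0 : 0 ≤ D v₀ := recCost_nonneg hcr0 (hreach v₀)
  have key : ∀ n (v : V), (Finset.univ.filter fun u => D u < D v).card ≤ n →
      ∃ w : T.Walk v₀ v, walkCost cr w ≤ D v := by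
    intro n
    induction n with
    | zero =>
      intro v hcard
      rcases eq_or_ne v v₀ with rfl | hv
      · exact ⟨SimpleGraph.Walk.nil, by simpa [walkCost] using hD0⟩
      · exfalso
        have hmem : parent v ∈ Finset.univ.filter fun u => D u < D v := by
          simp [hplt v hv]
        have := Finset.card_pos.mpr ⟨_, hmem⟩
        omega
    | succ n ih =>
      intro v hcard
      rcases eq_or_ne v v₀ with rfl | hv
      · exact ⟨SimpleGraph.Walk.nil, by simpa [walkCost] using hD0⟩
      · have hsub : (Finset.univ.filter fun u => D u < D (parent v)) ⊂
            Finset.univ.filter fun u => D u < D v := by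
          rw [Finset.ssubset_iff_of_subset]
          · exact ⟨parent v, by simp [hplt v hv], by simp⟩
          · intro u hu
            simp only [Finset.mem_filter, Finset.mem_univ, true_and] at hu ⊢
            exact hu.trans (hplt v hv)
        have hlt := Finset.card_lt_card hsub
        obtain ⟨w, hw⟩ := ih (parent v) (by omega)
        refine ⟨w.concat (hadjT v hv), ?_⟩
        rw [walkCost_concat]
        have := hple v hv
        linarith
  have hTreach : ∀ v, T.Reachable v₀ v := fun v => ⟨(key _ v le_rfl).choose⟩
  have hTconn : T.Connected := by
    have : Nonempty V := ⟨v₀⟩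
    exact ⟨fun a b => (hTreach a).symm.trans (hTreach b)⟩
  have hacyc : T.IsAcyclic := by
    intro x c hc
    have hne : c.support.toFinset.Nonempty :=
      ⟨x, List.mem_toFinset.mpr c.start_mem_support⟩
    obtain ⟨m, hmF, hmax'⟩ := Finset.exists_max_image c.support.toFinset D hne
    have hmmem : m ∈ c.support := List.mem_toFinset.mp hmF
    have hmax : ∀ y ∈ c.support, D y ≤ D m := fun y hy =>
      hmax' y (List.mem_toFinset.mpr hy)
    set c' := c.rotate m hmmem with hc'def
    have hc' : c'.IsCycle := hc.rotate hmmem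
    have hsup : ∀ y ∈ c'.support, D y ≤ D m := by
      intro y hy
      rw [SimpleGraph.Walk.support_eq_cons] at hy
      rcases List.mem_cons.mp hy with rfl | hy'
      · exact le_rfl
      · have hrot := SimpleGraph.Walk.support_rotate c m hmmem
        have : y ∈ c.support.tail := hrot.mem_iff.mp hy'
        exact hmax y (List.tail_subset _ this)
    clear_value c'
    cases c' with
    | nil => exact hc'.ne_nil rfl
    | @cons _ a _ h q =>
      have haD : D a ≤ D m := hsup a (by
        simp [SimpleGraph.Walk.support_cons, q.start_mem_support])
      have ha : parent m = a := by
        rcases h with ⟨hm0, hpm⟩ | ⟨ha0, hpa⟩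
        · exact hpm
        · exfalso
          have := hplt a ha0
          rw [hpa] at this
          exact absurd haD (not_le.mpr this)
      have hm0 : m ≠ v₀ := by
        rcases h with ⟨hm0, _⟩ | ⟨ha0, hpa⟩
        · exact hm0
        · exfalso
          have := hplt a ha0
          rw [hpa] at this
          exact absurd haD (not_le.mpr this)
      have hqnil : ¬ q.Nil := SimpleGraph.Walk.not_nil_of_ne h.ne'
      have hrnil : ¬ q.reverse.Nil := by
        rwa [SimpleGraph.Walk.nil_iff_length_eq, SimpleGraph.Walk.length_reverse,
          ← SimpleGraph.Walk.nil_iff_length_eq]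
      obtain ⟨b, hb, q₂, hq₂⟩ := SimpleGraph.Walk.not_nil_iff.mp hrnil
      have hbD : D b ≤ D m := by
        apply hsup
        have hbq : b ∈ q.support := by
          have : b ∈ q.reverse.support := by
            rw [hq₂]; simp [SimpleGraph.Walk.support_cons, q₂.start_mem_support]
          rwa [SimpleGraph.Walk.support_reverse, List.mem_reverse] at this
        simp [SimpleGraph.Walk.support_cons, hbq]
      have hbparent : parent m = b := by
        rcases hb with ⟨hm0', hpm'⟩ | ⟨hb0, hpb⟩
        · exact hpm'
        · exfalso
          have := hplt b hb0
          rw [hpb] at this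
          exact absurd hbD (not_le.mpr this)
      have hmb : s(m, b) ∈ q.edges := by
        have : s(m, b) ∈ q.reverse.edges := by
          rw [hq₂]; simp [SimpleGraph.Walk.edges_cons]
        rwa [SimpleGraph.Walk.edges_reverse, List.mem_reverse] at this
      have hnodup := hc'.isTrail.edges_nodup
      rw [SimpleGraph.Walk.edges_cons, List.nodup_cons] at hnodup
      apply hnodup.1
      have : s(m, a) = s(m, b) := by rw [← ha, ← hbparent]
      rw [this]
      exact hmb
  refine ⟨T, hTP, ⟨hTconn, hacyc⟩, ?_⟩
  intro v
  obtain ⟨w, hw⟩ := key _ v le_rfl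
  exact (recCost_le_walkCost hcr0T w).trans hw

lemma storCost_mono [Fintype V] {cs : Sym2 V → ℝ} {T P : SimpleGraph V}
    (hTP : T ≤ P) (hcs : ∀ e ∈ P.edgeSet, 0 ≤ cs e) :
    storCost cs T ≤ storCost cs P := by
  apply Finset.sum_le_sum_of_subset_of_nonneg
  · exact Set.Finite.toFinset_subset_toFinset.mpr (SimpleGraph.edgeSet_mono hTP)
  · intro e he _
    exact hcs e (Set.Finite.mem_toFinset _ |>.mp he)

end StmtAux

/-- under the independent retrieval scheme, any feasible connected spanning
subgraph (satisfying every snapshot's recreation-cost budget) can be replaced by a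
spanning tree that is still feasible and has total storage cost no larger; hence if a
feasible plan exists then an optimal plan that is a spanning tree exists. -/
theorem stmt_1 {V : Type*} [Fintype V] (G : SimpleGraph V) (hG : G.Connected) (v₀ : V)
    (cs cr : Sym2 V → ℝ)
    (hcs : ∀ e ∈ G.edgeSet, 0 < cs e) (hcr : ∀ e ∈ G.edgeSet, 0 < cr e)
    (k : ℕ) (S : Fin k → Finset V) (θ : Fin k → ℝ) :
    (∀ P : SimpleGraph V, P ≤ G → P.Connected →
      (∀ i, ∑ v ∈ S i, recCost cr P v₀ v ≤ θ i) →
      ∃ T : SimpleGraph V, T ≤ P ∧ T.IsTree ∧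
        (∀ i, ∑ v ∈ S i, recCost cr T v₀ v ≤ θ i) ∧
        storCost cs T ≤ storCost cs P) ∧
    ((∃ P : SimpleGraph V, P ≤ G ∧ P.Connected ∧
        (∀ i, ∑ v ∈ S i, recCost cr P v₀ v ≤ θ i)) →
      ∃ T : SimpleGraph V, T ≤ G ∧ T.IsTree ∧
        (∀ i, ∑ v ∈ S i, recCost cr T v₀ v ≤ θ i) ∧
        (∀ Q : SimpleGraph V, Q ≤ G → Q.Connected →
          (∀ i, ∑ v ∈ S i, recCost cr Q v₀ v ≤ θ i) →
          storCost cs T ≤ storCost cs Q)) := by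
  classical
  have part1 : ∀ P : SimpleGraph V, P ≤ G → P.Connected →
      (∀ i, ∑ v ∈ S i, recCost cr P v₀ v ≤ θ i) →
      ∃ T : SimpleGraph V, T ≤ P ∧ T.IsTree ∧
        (∀ i, ∑ v ∈ S i, recCost cr T v₀ v ≤ θ i) ∧
        storCost cs T ≤ storCost cs P := by
    intro P hPG hPc hPf
    obtain ⟨T, hTP, hTtree, hTle⟩ := StmtAux.exists_tree hPG hPc hcr v₀
    refine ⟨T, hTP, hTtree, ?_, ?_⟩
    · intro i
      calc ∑ v ∈ S i, recCost cr T v₀ v ≤ ∑ v ∈ S i, recCost cr P v₀ v :=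
            Finset.sum_le_sum fun v _ => hTle v
        _ ≤ θ i := hPf i
    · exact StmtAux.storCost_mono hTP
        (fun e he => (hcs e (SimpleGraph.edgeSet_mono hPG he)).le)
  refine ⟨part1, ?_⟩
  rintro ⟨P, hPG, hPc, hPf⟩
  obtain ⟨T₀, hT₀P, hT₀tree, hT₀f, -⟩ := part1 P hPG hPc hPf
  set 𝒯 : Set (SimpleGraph V) :=
    {T | T ≤ G ∧ T.IsTree ∧ ∀ i, ∑ v ∈ S i, recCost cr T v₀ v ≤ θ i} with h𝒯
  have hfin : 𝒯.Finite := Set.toFinite 𝒯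
  have hT₀mem : T₀ ∈ hfin.toFinset := by
    rw [Set.Finite.mem_toFinset]
    exact ⟨hT₀P.trans hPG, hT₀tree, hT₀f⟩
  obtain ⟨T, hTmem, hTmin⟩ :=
    Finset.exists_min_image hfin.toFinset (storCost cs) ⟨T₀, hT₀mem⟩
  rw [Set.Finite.mem_toFinset] at hTmem
  obtain ⟨hTG, hTtree, hTf⟩ := hTmem
  refine ⟨T, hTG, hTtree, hTf, ?_⟩
  intro Q hQG hQc hQf
  obtain ⟨T', hT'Q, hT'tree, hT'f, hT'cost⟩ := part1 Q hQG hQc hQf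
  have hT'mem : T' ∈ hfin.toFinset := by
    rw [Set.Finite.mem_toFinset]
    exact ⟨hT'Q.trans hQG, hT'tree, hT'f⟩
  exact (hTmin T' hT'mem).trans hT'cost
end

section
/- In a rooted spanning tree T of a weighted graph, performing a swap operation that changes the parent of vertex v_i from p_i to v_s (where (v_s, v_i) is a non-tree edge and v_s is not a descendant of v_i) changes the total storage cost by c_s(v_s, v_i) − c_s(p_i, v_i), and changes the recreation cost (root-to-vertex path length under c_r) of v_i and every descendant of v_i by exactly C_r(T, v_s) + c_r(v_s, v_i) − C_r(T, v_i), while leaving the recreation cost of all other vertices unchanged. -/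
open scoped Classical

/-- swapping the parent of `v_i` from `p v_i` to `v_s` (a non-tree edge with
`v_s` not a descendant of `v_i`) changes the total storage cost by
`c_s(v_s, v_i) − c_s(p_i, v_i)`, changes the recreation cost of `v_i` and all its
descendants by exactly `C_r(T, v_s) + c_r(v_s, v_i) − C_r(T, v_i)`, and leaves all other
recreation costs unchanged.  A rooted spanning tree is modeled by its parent function
`p` (with `p v₀ = v₀` and every vertex reaching the root by iterating `p`);
`C_r(T, v)` is the sum of `c_r` along the root-to-`v` path, characterized by the
recurrence `C_r(v₀) = 0`, `C_r(v) = C_r(p v) + c_r(p v, v)`; `v` is a descendant of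
`v_i` iff some iterate of `p` maps `v` to `v_i`. -/
theorem stmt_2 {V : Type*} [Fintype V] (v₀ : V)
    (cs crw : V → V → ℝ)
    (hcs_symm : ∀ u v, cs u v = cs v u) (hcr_symm : ∀ u v, crw u v = crw v u)
    (p : V → V) (hroot : p v₀ = v₀)
    (hreach : ∀ v : V, ∃ n : ℕ, p^[n] v = v₀)
    (Cr : V → ℝ) (hCr0 : Cr v₀ = 0)
    (hCr : ∀ v, v ≠ v₀ → Cr v = Cr (p v) + crw (p v) v)
    (vi vs : V) (hvi : vi ≠ v₀)
    (hnontree : vs ≠ p vi)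
    (hnotdesc : ¬ ∃ n : ℕ, p^[n] vs = vi)
    -- the tree after the swap, with its parent function and recreation costs
    (p' : V → V) (hp' : p' = Function.update p vi vs)
    (Cr' : V → ℝ) (hCr'0 : Cr' v₀ = 0)
    (hCr' : ∀ v, v ≠ v₀ → Cr' v = Cr' (p' v) + crw (p' v) v) :
    -- storage cost change
    (∑ v ∈ Finset.univ.filter (fun v => v ≠ v₀), cs (p' v) v) =
      (∑ v ∈ Finset.univ.filter (fun v => v ≠ v₀), cs (p v) v)
        + (cs vs vi - cs (p vi) vi) ∧
    -- recreation cost change of `v_i` and every descendant of `v_i`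
    (∀ v : V, (∃ n : ℕ, p^[n] v = vi) →
      Cr' v = Cr v + (Cr vs + crw vs vi - Cr vi)) ∧
    -- all other recreation costs are unchanged
    (∀ v : V, ¬ (∃ n : ℕ, p^[n] v = vi) → Cr' v = Cr v) := by
  subst hp'
  have hp'vi : Function.update p vi vs vi = vs := Function.update_self _ _ _
  have hp'ne : ∀ v, v ≠ vi → Function.update p vi vs v = p v := fun v h =>
    Function.update_of_ne h _ _
  have hA : ∀ n (v : V), p^[n] v = v₀ → (¬ ∃ m, p^[m] v = vi) → Cr' v = Cr v := by
    intro n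
    induction n with
    | zero => intro v hv _; simp only [Function.iterate_zero, id] at hv; subst hv
              rw [hCr'0, hCr0]
    | succ n ih =>
      intro v hv hnd
      by_cases hv0 : v = v₀
      · subst hv0; rw [hCr'0, hCr0]
      · have hvne : v ≠ vi := fun h => hnd ⟨0, by simp [h]⟩
        have hpd : ¬ ∃ m, p^[m] (p v) = vi := by
          rintro ⟨m, hm⟩
          exact hnd ⟨m + 1, by rw [Function.iterate_succ_apply]; exact hm⟩
        have hpv : p^[n] (p v) = v₀ := by
          rw [← Function.iterate_succ_apply]; exact hv
        rw [hCr' v hv0, hCr v hv0, hp'ne v hvne, ih (p v) hpv hpd]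
  have hAns : ∀ v : V, (¬ ∃ m, p^[m] v = vi) → Cr' v = Cr v := fun v h =>
    (hreach v).elim (fun n hn => hA n v hn h)
  have hCrvs : Cr' vs = Cr vs := hAns vs hnotdesc
  have hv0iter : ∀ n : ℕ, p^[n] v₀ = v₀ := by
    intro n
    induction n with
    | zero => rfl
    | succ n ih => rw [Function.iterate_succ_apply, hroot, ih]
  have hB : ∀ n (v : V), p^[n] v = vi → Cr' v = Cr v + (Cr vs + crw vs vi - Cr vi) := by
    intro n
    induction n using Nat.strong_induction_on with
    | _ n ih =>
      intro v hv
      by_cases hvi' : v = vi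
      · subst hvi'
        rw [hCr' v hvi, hp'vi, hCrvs]; ring
      · cases n with
        | zero => exact absurd hv hvi'
        | succ n =>
          have hv0 : v ≠ v₀ := by
            intro h; subst h; rw [hv0iter] at hv; exact hvi hv.symm
          have hpv : p^[n] (p v) = vi := by
            rw [← Function.iterate_succ_apply]; exact hv
          rw [hCr' v hv0, hCr v hv0, hp'ne v hvi',
            ih n (Nat.lt_succ_self n) (p v) hpv]
          ring
  refine ⟨?_, fun v hv => hv.elim (fun n hn => hB n v hn), hAns⟩
  have hmem : vi ∈ Finset.univ.filter (fun v => v ≠ v₀) := by simp [hvi]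
  have key : ∀ v ∈ Finset.univ.filter (fun v => v ≠ v₀),
      cs (Function.update p vi vs v) v =
        Function.update (fun v => cs (p v) v) vi (cs vs vi) v := by
    intro v _
    by_cases h : v = vi
    · subst h; rw [hp'vi, Function.update_self]
    · rw [hp'ne v h, Function.update_of_ne h]
  rw [Finset.sum_congr rfl key, Finset.sum_update_of_mem hmem,
    ← Finset.add_sum_erase _ _ hmem, Finset.sdiff_singleton_eq_erase]
  ring
end

section
/- Combining interval propagation with the error-determinism condition: if the final-layer interval bounds [o_{i,min}, o_{i,max}] computed by layerwise interval propagation satisfy o_{k,min} > o_{i,max} for all i ≠ k, then the argmax prediction of the network equals k for every choice of full-precision weights consistent with the intervals; i.e., the low-precision prediction is guaranteed correct. -/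
/-- Forward evaluation of a feedforward network `fᵢ(x) = σᵢ(Wᵢ x + bᵢ)`:
`fwd … k` is the output of layer `k` (layer `0` being the fixed input `d`). -/
noncomputable def fwd (dim : ℕ → ℕ)
    (W : ∀ k, Matrix (Fin (dim (k + 1))) (Fin (dim k)) ℝ)
    (b : ∀ k, Fin (dim (k + 1)) → ℝ)
    (σ : ℕ → ℝ → ℝ) (d : Fin (dim 0) → ℝ) : ∀ k, Fin (dim k) → ℝ
  | 0 => d
  | (k + 1) => fun j => σ k ((∑ i, W k j i * fwd dim W b σ d k i) + b k j)

/-- min of the four products of interval endpoints. -/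
noncomputable def pmin (a b x y : ℝ) : ℝ := min (min (a * x) (a * y)) (min (b * x) (b * y))

/-- max of the four products of interval endpoints. -/
noncomputable def pmax (a b x y : ℝ) : ℝ := max (max (a * x) (a * y)) (max (b * x) (b * y))

/-- Layerwise interval propagation: starting from the fixed input `d`, propagate
lower/upper bounds through each affine layer by interval arithmetic on the uncertain
weights and biases, then apply the monotone activation to the endpoints. -/
noncomputable def iprop (dim : ℕ → ℕ)
    (Wlo Whi : ∀ k, Matrix (Fin (dim (k + 1))) (Fin (dim k)) ℝ)
    (blo bhi : ∀ k, Fin (dim (k + 1)) → ℝ)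
    (σ : ℕ → ℝ → ℝ) (d : Fin (dim 0) → ℝ) :
    ∀ k, (Fin (dim k) → ℝ) × (Fin (dim k) → ℝ)
  | 0 => (d, d)
  | (k + 1) =>
    (fun j => σ k ((∑ i, pmin (Wlo k j i) (Whi k j i)
        ((iprop dim Wlo Whi blo bhi σ d k).1 i) ((iprop dim Wlo Whi blo bhi σ d k).2 i)) + blo k j),
     fun j => σ k ((∑ i, pmax (Wlo k j i) (Whi k j i)
        ((iprop dim Wlo Whi blo bhi σ d k).1 i) ((iprop dim Wlo Whi blo bhi σ d k).2 i)) + bhi k j))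


lemma le_pmax_aux {a b lo hi w x : ℝ} (ha : a ≤ w) (hb : w ≤ b)
    (hlo : lo ≤ x) (hhi : x ≤ hi) : w * x ≤ pmax a b lo hi := by
  simp only [pmax, le_max_iff]
  rcases le_total 0 x with hx | hx
  · rcases le_total 0 b with h | h
    · right; right; nlinarith
    · right; left; nlinarith
  · rcases le_total 0 a with h | h
    · left; right; nlinarith
    · left; left; nlinarith

lemma pmin_le_aux {a b lo hi w x : ℝ} (ha : a ≤ w) (hb : w ≤ b)
    (hlo : lo ≤ x) (hhi : x ≤ hi) : pmin a b lo hi ≤ w * x := by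
  simp only [pmin, min_le_iff]
  rcases le_total 0 x with hx | hx
  · rcases le_total 0 a with h | h
    · left; left; nlinarith
    · left; right; nlinarith
  · rcases le_total 0 b with h | h
    · right; left; nlinarith
    · right; right; nlinarith

lemma iprop_bound (dim : ℕ → ℕ)
    (Wlo Whi W : ∀ k, Matrix (Fin (dim (k + 1))) (Fin (dim k)) ℝ)
    (blo bhi b : ∀ k, Fin (dim (k + 1)) → ℝ)
    (σ : ℕ → ℝ → ℝ) (hσ : ∀ k, Monotone (σ k))
    (hW : ∀ k j i, Wlo k j i ≤ W k j i ∧ W k j i ≤ Whi k j i)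
    (hb : ∀ k j, blo k j ≤ b k j ∧ b k j ≤ bhi k j)
    (d : Fin (dim 0) → ℝ) :
    ∀ k (i : Fin (dim k)),
      (iprop dim Wlo Whi blo bhi σ d k).1 i ≤ fwd dim W b σ d k i ∧
      fwd dim W b σ d k i ≤ (iprop dim Wlo Whi blo bhi σ d k).2 i := by
  intro k
  induction k with
  | zero => intro i; simp [iprop, fwd]
  | succ k ih =>
    intro j
    simp only [iprop, fwd]
    constructor
    · apply hσ
      apply add_le_add _ (hb k j).1
      apply Finset.sum_le_sum
      intro i _
      exact pmin_le_aux (hW k j i).1 (hW k j i).2 (ih i).1 (ih i).2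
    · apply hσ
      apply add_le_add _ (hb k j).2
      apply Finset.sum_le_sum
      intro i _
      exact le_pmax_aux (hW k j i).1 (hW k j i).2 (ih i).1 (ih i).2


/-- if the final-layer intervals computed by layerwise interval
propagation have coordinate `k*` whose lower bound strictly exceeds every other
coordinate's upper bound, then for every choice of full-precision weights and biases
consistent with the intervals, the network's argmax prediction equals `k*`. -/
theorem stmt_9 (dim : ℕ → ℕ)
    (Wlo Whi W : ∀ k, Matrix (Fin (dim (k + 1))) (Fin (dim k)) ℝ)
    (blo bhi b : ∀ k, Fin (dim (k + 1)) → ℝ)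
    (σ : ℕ → ℝ → ℝ) (hσ : ∀ k, Monotone (σ k))
    (hW : ∀ k j i, Wlo k j i ≤ W k j i ∧ W k j i ≤ Whi k j i)
    (hb : ∀ k j, blo k j ≤ b k j ∧ b k j ≤ bhi k j)
    (d : Fin (dim 0) → ℝ)
    (L : ℕ) (kstar : Fin (dim L))
    (hdet : ∀ i : Fin (dim L), i ≠ kstar →
      (iprop dim Wlo Whi blo bhi σ d L).2 i < (iprop dim Wlo Whi blo bhi σ d L).1 kstar) :
    (∀ i : Fin (dim L), i ≠ kstar → fwd dim W b σ d L i < fwd dim W b σ d L kstar) ∧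
    (∀ j : Fin (dim L), (∀ i, fwd dim W b σ d L i ≤ fwd dim W b σ d L j) → j = kstar) := by
  have key : ∀ i : Fin (dim L), i ≠ kstar →
      fwd dim W b σ d L i < fwd dim W b σ d L kstar := by
    intro i hi
    calc fwd dim W b σ d L i ≤ (iprop dim Wlo Whi blo bhi σ d L).2 i :=
          (iprop_bound dim Wlo Whi W blo bhi b σ hσ hW hb d L i).2
      _ < (iprop dim Wlo Whi blo bhi σ d L).1 kstar := hdet i hi
      _ ≤ fwd dim W b σ d L kstar :=
          (iprop_bound dim Wlo Whi W blo bhi b σ hσ hW hb d L kstar).1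
  refine ⟨key, fun j hj => ?_⟩
  by_contra h
  exact absurd (hj kstar) (not_le.mpr (key j h))
end
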